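/- arXiv:1709.04594 — 3 statements merged into one kernel-verified Lean document; each statement's English description precedes it below -/
import Mathlib

section
/- Let ρ₁, ρ₂ > 0 and p ∈ [0,1]. For each n ∈ ℕ let n₁(n), n₂(n) be positive integers with n₁(n)/n → ρ₁ and n₂(n)/n → ρ₂ as n → ∞, and let A⁽ⁿ⁾ be an n₁(n) × n₂(n) random matrix, defined on a common probability space, whose entries are mutually independent Bernoulli random variables with success probability p. Then almost surely ‖ A⁽ⁿ⁾/n − √(ρ₁ρ₂) · p · (1_{n₁}/√n₁)(1_{n₂}/√n₂)ᵀ ‖₂ → 0 as n → ∞. -/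
open MeasureTheory ProbabilityTheory Filter
open scoped Matrix.Norms.L2Operator
open scoped Matrix

/-- Spectral norm (largest singular value) of a real rectangular matrix. -/
noncomputable def specNorm {a b : ℕ} (M : Matrix (Fin a) (Fin b) ℝ) : ℝ :=
  ‖LinearMap.toContinuousLinearMap (Matrix.toEuclideanLin M)‖

lemma specNorm_eq_norm {a b : ℕ} (M : Matrix (Fin a) (Fin b) ℝ) : specNorm M = ‖M‖ := rfl

lemma l2_norm_le_frobenius {a b : ℕ} (M : Matrix (Fin a) (Fin b) ℝ) :
    ‖M‖ ≤ Real.sqrt (∑ i, ∑ j, M i j ^ 2) := by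
  rw [Matrix.l2_opNorm_def]
  apply ContinuousLinearMap.opNorm_le_bound _ (Real.sqrt_nonneg _)
  intro z
  have hz : ‖z‖ = Real.sqrt (∑ j, z j ^ 2) := by
    rw [EuclideanSpace.norm_eq]
    congr 1; apply Finset.sum_congr rfl; intro j _
    rw [Real.norm_eq_abs, sq_abs]
  have happ : ‖(Matrix.toEuclideanLin.trans LinearMap.toContinuousLinearMap M) z‖
      = Real.sqrt (∑ i, (∑ j, M i j * z j) ^ 2) := by
    rw [EuclideanSpace.norm_eq]
    congr 1; apply Finset.sum_congr rfl; intro i _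
    rw [Real.norm_eq_abs, sq_abs]
    rfl
  rw [happ, hz, ← Real.sqrt_mul (by positivity)]
  apply Real.sqrt_le_sqrt
  rw [Finset.sum_mul]
  apply Finset.sum_le_sum
  intro i _
  exact Finset.sum_mul_sq_le_sq_mul_sq _ _ _

lemma norm_pow_six_le {a b : ℕ} (M : Matrix (Fin a) (Fin b) ℝ) :
    ‖M‖ ^ 6 ≤ ∑ i, ∑ j, (M * Mᵀ * M) i j ^ 2 := by
  have hMT : Mᴴ = Mᵀ := Matrix.conjTranspose_eq_transpose_of_trivial M
  set S := Mᵀ * M with hS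
  have hSH : Sᴴ = S := by
    rw [hS, ← hMT, Matrix.conjTranspose_mul, Matrix.conjTranspose_conjTranspose]
  have h1 : ‖S‖ = ‖M‖ ^ 2 := by
    rw [hS, ← hMT, Matrix.l2_opNorm_conjTranspose_mul_self]; ring
  have h2 : ‖S * S‖ = ‖S‖ ^ 2 := by
    have := Matrix.l2_opNorm_conjTranspose_mul_self S
    rw [hSH] at this; rw [this]; ring
  have hSSH : (S * S)ᴴ = S * S := by rw [Matrix.conjTranspose_mul, hSH]
  have h4 : ‖S‖ ^ 4 = ‖S * S * (S * S)‖ := by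
    have := Matrix.l2_opNorm_conjTranspose_mul_self (S * S)
    rw [hSSH] at this; rw [this, h2]; ring
  have h5 : ‖S‖ ^ 4 ≤ ‖S * S * S‖ * ‖S‖ := by
    rw [h4, ← Matrix.mul_assoc]
    exact Matrix.l2_opNorm_mul _ _
  have h6 : ‖S‖ ^ 3 ≤ ‖S * S * S‖ := by
    rcases eq_or_lt_of_le (norm_nonneg S) with h0 | h0
    · rw [← h0]; simpa using norm_nonneg (S * S * S)
    · nlinarith [norm_nonneg (S * S * S)]
  have h7 : S * S * S = (M * S)ᴴ * (M * S) := by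
    rw [Matrix.conjTranspose_mul, hSH, hMT, Matrix.mul_assoc S Mᵀ (M * S),
      ← Matrix.mul_assoc Mᵀ M S, ← hS, Matrix.mul_assoc]
  have h8 : ‖S * S * S‖ = ‖M * S‖ ^ 2 := by
    rw [h7, Matrix.l2_opNorm_conjTranspose_mul_self]; ring
  have h9 : ‖M * S‖ ^ 2 ≤ ∑ i, ∑ j, (M * S) i j ^ 2 := by
    have := l2_norm_le_frobenius (M * S)
    have h0 : (0:ℝ) ≤ ∑ i, ∑ j, (M * S) i j ^ 2 := by positivity
    nlinarith [norm_nonneg (M * S), Real.sq_sqrt h0, Real.sqrt_nonneg (∑ i, ∑ j, (M * S) i j ^ 2)]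
  calc ‖M‖ ^ 6 = (‖M‖ ^ 2) ^ 3 := by ring
    _ = ‖S‖ ^ 3 := by rw [h1]
    _ ≤ ‖S * S * S‖ := h6
    _ = ‖M * S‖ ^ 2 := h8
    _ ≤ ∑ i, ∑ j, (M * S) i j ^ 2 := h9
    _ = ∑ i, ∑ j, (M * Mᵀ * M) i j ^ 2 := by rw [hS, ← Matrix.mul_assoc]

section core
variable {Ω : Type*} [MeasureSpace Ω] [IsProbabilityMeasure (ℙ : Measure Ω)]
variable {ι' : Type*} [Fintype ι'] [DecidableEq ι'] {α : Type*} [Fintype α] [DecidableEq α]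

lemma prod_meas (X : ι' → Ω → ℝ) (hmeas : ∀ e, Measurable (X e)) (m : α → ι') :
    Measurable (fun ω => ∏ a, X (m a) ω) :=
  Finset.measurable_prod _ (fun a _ => hmeas (m a))

lemma prod_abs_le_one (X : ι' → Ω → ℝ) (hbdd : ∀ e ω, |X e ω| ≤ 1) (m : α → ι') (ω : Ω) :
    |∏ a, X (m a) ω| ≤ 1 := by
  rw [Finset.abs_prod]
  exact Finset.prod_le_one (fun a _ => abs_nonneg _) (fun a _ => hbdd _ _)

lemma prod_integrable (X : ι' → Ω → ℝ) (hmeas : ∀ e, Measurable (X e))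
    (hbdd : ∀ e ω, |X e ω| ≤ 1) (m : α → ι') :
    Integrable (fun ω => ∏ a, X (m a) ω) ℙ :=
  (integrable_const (1:ℝ)).mono' (prod_meas X hmeas m).aestronglyMeasurable
    (ae_of_all _ fun ω => by
      rw [Real.norm_eq_abs]; exact prod_abs_le_one X hbdd m ω)

lemma abs_integral_prod_le_one (X : ι' → Ω → ℝ) (hmeas : ∀ e, Measurable (X e))
    (hbdd : ∀ e ω, |X e ω| ≤ 1) (m : α → ι') :
    |∫ ω, ∏ a, X (m a) ω| ≤ 1 := by
  calc |∫ ω, ∏ a, X (m a) ω| ≤ ∫ ω, |∏ a, X (m a) ω| := by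
        rw [← Real.norm_eq_abs]
        refine (norm_integral_le_integral_norm _).trans (le_of_eq ?_)
        congr 1
    _ ≤ ∫ _ω, (1:ℝ) := by
        apply integral_mono (prod_integrable X hmeas hbdd m).abs (integrable_const 1)
        exact fun ω => prod_abs_le_one X hbdd m ω
    _ = 1 := by simp

lemma integral_prod_eq_zero (X : ι' → Ω → ℝ) (hmeas : ∀ e, Measurable (X e))
    (hindep : iIndepFun X ℙ)
    (hbdd : ∀ e ω, |X e ω| ≤ 1)
    (m : α → ι') (a₀ : α) (h1 : ∀ c, c ≠ a₀ → m c ≠ m a₀)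
    (hzero : ∫ ω, X (m a₀) ω = 0) :
    ∫ ω, ∏ a, X (m a) ω = 0 := by
  set T : Finset ι' := (Finset.univ.erase a₀).image m with hT
  have hdisj : Disjoint ({m a₀} : Finset ι') T := by
    rw [Finset.disjoint_left]
    intro x hx hxT
    rw [Finset.mem_singleton] at hx
    rw [hT, Finset.mem_image] at hxT
    obtain ⟨c, hc, hcx⟩ := hxT
    exact h1 c (Finset.ne_of_mem_erase hc) (hcx.trans hx ▸ by rw [hcx, hx])
  have hIF := hindep.indepFun_finset {m a₀} T hdisj hmeas
  have hφ : Measurable (fun f : ({m a₀} : Finset ι') → ℝ =>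
      f ⟨m a₀, Finset.mem_singleton_self _⟩) := measurable_pi_apply _
  have hψ : Measurable (fun f : {x : ι' // x ∈ T} → ℝ =>
      ∏ c ∈ (Finset.univ.erase a₀).attach,
        f (Subtype.mk (m c.1) (Finset.mem_image_of_mem m c.2))) :=
    Finset.measurable_prod _ (fun c _ => measurable_pi_apply _)
  have hIF2 : IndepFun (fun ω => X (m a₀) ω)
      (fun ω => ∏ c ∈ (Finset.univ.erase a₀).attach, X (m c.1) ω) ℙ :=
    hIF.comp hφ hψ
  have hprod : ∀ ω, ∏ a, X (m a) ω
      = X (m a₀) ω * ∏ c ∈ (Finset.univ.erase a₀).attach, X (m c.1) ω := by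
    intro ω
    rw [Finset.prod_attach _ (fun c => X (m c) ω),
      Finset.mul_prod_erase Finset.univ (fun c => X (m c) ω) (Finset.mem_univ a₀)]
  have hint := hIF2.integral_fun_mul_eq_mul_integral (hmeas _).aestronglyMeasurable
    (Finset.measurable_prod _ (fun c _ => hmeas _)).aestronglyMeasurable
  calc ∫ ω, ∏ a, X (m a) ω
      = ∫ ω, X (m a₀) ω * ∏ c ∈ (Finset.univ.erase a₀).attach, X (m c.1) ω := by
        congr 1; ext ω; exact hprod ω
    _ = (∫ ω, X (m a₀) ω) * ∫ ω, ∏ c ∈ (Finset.univ.erase a₀).attach, X (m c.1) ω := hint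
    _ = 0 := by rw [hzero, zero_mul]

end core

def wedges {I K : Type*} (w : (I × K) × (I × K) × (I × K)) : Fin 6 → I × K :=
  fun c => match c with
  | 0 => (w.1.1, w.2.1.2)
  | 1 => (w.2.1.1, w.2.1.2)
  | 2 => (w.2.1.1, w.1.2)
  | 3 => (w.1.1, w.2.2.2)
  | 4 => (w.2.2.1, w.2.2.2)
  | 5 => (w.2.2.1, w.1.2)

lemma trsum_eq {a b : ℕ} (M : Matrix (Fin a) (Fin b) ℝ) :
    ∑ i, ∑ j, (M * Mᵀ * M) i j ^ 2
      = ∑ w : (Fin a × Fin b) × (Fin a × Fin b) × (Fin a × Fin b),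
          ∏ c : Fin 6, M (wedges w c).1 (wedges w c).2 := by
  have h1 : ∀ i j, (M * Mᵀ * M) i j = ∑ p : Fin a × Fin b, M i p.2 * M p.1 p.2 * M p.1 j := by
    intro i j
    rw [Matrix.mul_apply, Fintype.sum_prod_type]
    refine Finset.sum_congr rfl fun l _ => ?_
    rw [Matrix.mul_apply, Finset.sum_mul]
    refine Finset.sum_congr rfl fun k _ => ?_
    rw [Matrix.transpose_apply]
  simp only [Fintype.sum_prod_type]
  refine Finset.sum_congr rfl fun i _ => Finset.sum_congr rfl fun j _ => ?_
  rw [h1, sq, Finset.sum_mul_sum, Fintype.sum_prod_type]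
  refine Finset.sum_congr rfl fun l _ => ?_
  refine Finset.sum_congr rfl fun k _ => ?_
  rw [Fintype.sum_prod_type]
  refine Finset.sum_congr rfl fun l' _ => Finset.sum_congr rfl fun k' _ => ?_
  show _ = ∏ c : Fin 6, M (wedges ((i,j),(l,k),(l',k')) c).1 (wedges ((i,j),(l,k),(l',k')) c).2
  rw [Fin.prod_univ_six]
  show M i k * M l k * M l j * (M i k' * M l' k' * M l' j)
      = M i k * M l k * M l j * M i k' * M l' k' * M l' j
  ring

lemma classify {I K : Type*} (i l l' : I) (j k k' : K)
    (hS : ¬ ((i = l ∨ i = l' ∨ l = l') ∧ (k = j ∨ k = k' ∨ j = k')))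
    (halli : ¬ (i = l ∧ l = l')) (hallj : ¬ (k = j ∧ j = k')) :
    ∃ a₀ : Fin 6, ∀ c : Fin 6, c ≠ a₀ →
      wedges ((i,j),(l,k),(l',k')) c ≠ wedges ((i,j),(l,k),(l',k')) a₀ := by
  by_cases hip : i = l ∨ i = l' ∨ l = l'
  · have hjp : ¬(k = j ∨ k = k' ∨ j = k') := fun h => hS ⟨hip, h⟩
    push_neg at hjp
    obtain ⟨hkj, hkk', hjk'⟩ := hjp
    by_cases hil : i = l
    · have hll' : l ≠ l' := fun h => halli ⟨hil, h⟩
      refine ⟨2, fun c hc => ?_⟩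
      fin_cases c
      all_goals first
        | exact absurd (by decide) hc
        | (simp [wedges, Prod.ext_iff]; tauto)
    · have e1 : l ≠ i := Ne.symm hil
      have e2 : j ≠ k := Ne.symm hkj
      have e3 : k' ≠ k := Ne.symm hkk'
      refine ⟨0, fun c hc => ?_⟩
      fin_cases c
      all_goals first
        | exact absurd (by decide) hc
        | (simp [wedges, Prod.ext_iff]; tauto)
  · push_neg at hip
    obtain ⟨hil, hil', hll'⟩ := hip
    by_cases hkj : k = j
    · have hjk' : j ≠ k' := fun h => hallj ⟨hkj, h⟩
      refine ⟨5, fun c hc => ?_⟩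
      fin_cases c
      all_goals first
        | exact absurd (by decide) hc
        | (simp [wedges, Prod.ext_iff]; tauto)
    · have e1 : j ≠ k := fun h => hkj h.symm
      have e2 : l' ≠ l := Ne.symm hll'
      refine ⟨1, fun c hc => ?_⟩
      fin_cases c
      all_goals first
        | exact absurd (by decide) hc
        | (simp [wedges, Prod.ext_iff]; tauto)

section expect
variable {Ω : Type*} [MeasureSpace Ω] [IsProbabilityMeasure (ℙ : Measure Ω)]

lemma ite_nn (P : Prop) [Decidable P] : (0:ℝ) ≤ if P then 1 else 0 := by
  split <;> norm_num

lemma integral_term_le {a b : ℕ} (X : Fin a × Fin b → Ω → ℝ)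
    (hmeas : ∀ e, Measurable (X e)) (hbdd : ∀ e ω, |X e ω| ≤ 1)
    (hindep : iIndepFun X ℙ)
    (hzero : ∀ e, ∫ ω, X e ω = 0)
    (i l l' : Fin a) (j k k' : Fin b) :
    ∫ ω, ∏ c : Fin 6, X (wedges ((i,j),(l,k),(l',k')) c) ω ≤
      ((if i = l then (1:ℝ) else 0) + (if i = l' then 1 else 0) + (if l = l' then 1 else 0)) *
      ((if k = j then (1:ℝ) else 0) + (if k = k' then 1 else 0) + (if j = k' then 1 else 0))
      + (if i = l then (1:ℝ) else 0) * (if l = l' then 1 else 0)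
      + (if k = j then (1:ℝ) else 0) * (if j = k' then 1 else 0) := by
  have n1 := ite_nn (i = l); have n2 := ite_nn (i = l'); have n3 := ite_nn (l = l')
  have n4 := ite_nn (k = j); have n5 := ite_nn (k = k'); have n6 := ite_nn (j = k')
  have n7 : (0:ℝ) ≤ (if i = l then (1:ℝ) else 0) * (if l = l' then 1 else 0) := mul_nonneg n1 n3
  have n8 : (0:ℝ) ≤ (if k = j then (1:ℝ) else 0) * (if j = k' then 1 else 0) := mul_nonneg n4 n6
  by_cases hS : ((i = l ∨ i = l' ∨ l = l') ∧ (k = j ∨ k = k' ∨ j = k'))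
      ∨ (i = l ∧ l = l') ∨ (k = j ∧ j = k')
  · have h1 : ∫ ω, ∏ c : Fin 6, X (wedges ((i,j),(l,k),(l',k')) c) ω ≤ 1 :=
      (le_abs_self _).trans (abs_integral_prod_le_one X hmeas hbdd _)
    refine h1.trans ?_
    rcases hS with ⟨hi, hj⟩ | hai | haj
    · have hI : (1:ℝ) ≤ (if i = l then (1:ℝ) else 0) + (if i = l' then 1 else 0)
          + (if l = l' then 1 else 0) := by
        rcases hi with h | h | h <;> rw [if_pos h] <;> linarith
      have hJ : (1:ℝ) ≤ (if k = j then (1:ℝ) else 0) + (if k = k' then 1 else 0)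
          + (if j = k' then 1 else 0) := by
        rcases hj with h | h | h <;> rw [if_pos h] <;> linarith
      nlinarith
    · rw [if_pos hai.1, if_pos hai.2]; nlinarith
    · rw [if_pos haj.1, if_pos haj.2]; nlinarith
  · have h1 : ¬ ((i = l ∨ i = l' ∨ l = l') ∧ (k = j ∨ k = k' ∨ j = k')) :=
      fun h => hS (Or.inl h)
    have h2 : ¬ (i = l ∧ l = l') := fun h => hS (Or.inr (Or.inl h))
    have h3 : ¬ (k = j ∧ j = k') := fun h => hS (Or.inr (Or.inr h))
    obtain ⟨a₀, ha₀⟩ := classify i l l' j k k' h1 h2 h3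
    rw [integral_prod_eq_zero X hmeas hindep hbdd _ a₀ ha₀ (hzero _)]
    nlinarith

end expect

noncomputable def trs {a b : ℕ} (M : Matrix (Fin a) (Fin b) ℝ) : ℝ :=
  ∑ i, ∑ j, (M * Mᵀ * M) i j ^ 2

lemma norm_six_le_trs {a b : ℕ} (M : Matrix (Fin a) (Fin b) ℝ) : ‖M‖ ^ 6 ≤ trs M :=
  norm_pow_six_le M

section expect2
variable {Ω : Type*} [MeasureSpace Ω] [IsProbabilityMeasure (ℙ : Measure Ω)]

lemma trs_eq_sum {a b : ℕ} (X : Fin a × Fin b → Ω → ℝ) (ω : Ω) :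
    trs (Matrix.of fun i j => X (i,j) ω)
      = ∑ w : (Fin a × Fin b) × (Fin a × Fin b) × (Fin a × Fin b),
          ∏ c : Fin 6, X (wedges w c) ω := by
  rw [trs, trsum_eq]
  refine Finset.sum_congr rfl fun w _ => Finset.prod_congr rfl fun c _ => ?_
  show X ((wedges w c).1, (wedges w c).2) ω = X (wedges w c) ω
  rw [Prod.mk.eta]

lemma trs_meas {a b : ℕ} (X : Fin a × Fin b → Ω → ℝ) (hmeas : ∀ e, Measurable (X e)) :
    Measurable (fun ω => trs (Matrix.of fun i j => X (i,j) ω)) := by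
  rw [funext (trs_eq_sum X)]
  exact Finset.measurable_sum _ (fun w _ => prod_meas X hmeas (wedges w))

lemma trs_integrable {a b : ℕ} (X : Fin a × Fin b → Ω → ℝ)
    (hmeas : ∀ e, Measurable (X e)) (hbdd : ∀ e ω, |X e ω| ≤ 1) :
    Integrable (fun ω => trs (Matrix.of fun i j => X (i,j) ω)) ℙ := by
  rw [funext (trs_eq_sum X)]
  exact integrable_finset_sum _ (fun w _ => prod_integrable X hmeas hbdd (wedges w))

lemma expect_trs_le {a b : ℕ} (X : Fin a × Fin b → Ω → ℝ)
    (hmeas : ∀ e, Measurable (X e)) (hbdd : ∀ e ω, |X e ω| ≤ 1)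
    (hindep : iIndepFun X ℙ)
    (hzero : ∀ e, ∫ ω, X e ω = 0) :
    ∫ ω, trs (Matrix.of fun i j => X (i,j) ω)
      ≤ 9*(a:ℝ)^2*(b:ℝ)^2 + (a:ℝ)*(b:ℝ)^3 + (a:ℝ)^3*(b:ℝ) := by
  rw [funext (trs_eq_sum X)]
  rw [integral_finset_sum _ (fun w _ => prod_integrable X hmeas hbdd (wedges w))]
  have hle : (∑ w : (Fin a × Fin b) × (Fin a × Fin b) × (Fin a × Fin b),
        ∫ ω, ∏ c : Fin 6, X (wedges w c) ω)
      ≤ ∑ w : (Fin a × Fin b) × (Fin a × Fin b) × (Fin a × Fin b),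
          (((if w.1.1 = w.2.1.1 then (1:ℝ) else 0) + (if w.1.1 = w.2.2.1 then 1 else 0)
              + (if w.2.1.1 = w.2.2.1 then 1 else 0)) *
            ((if w.2.1.2 = w.1.2 then (1:ℝ) else 0) + (if w.2.1.2 = w.2.2.2 then 1 else 0)
              + (if w.1.2 = w.2.2.2 then 1 else 0))
           + (if w.1.1 = w.2.1.1 then (1:ℝ) else 0) * (if w.2.1.1 = w.2.2.1 then 1 else 0)
           + (if w.2.1.2 = w.1.2 then (1:ℝ) else 0) * (if w.1.2 = w.2.2.2 then 1 else 0)) := by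
    refine Finset.sum_le_sum fun w _ => ?_
    obtain ⟨⟨i,j⟩,⟨l,k⟩,⟨l',k'⟩⟩ := w
    exact integral_term_le X hmeas hbdd hindep hzero i l l' j k k'
  refine hle.trans (le_of_eq ?_)
  simp only [Fintype.sum_prod_type]
  simp [Finset.mul_sum, Finset.sum_mul, Finset.sum_add_distrib,
    ite_and, apply_ite (Nat.cast : ℕ → ℝ), Finset.sum_ite_eq, Finset.sum_ite_eq',
    Finset.card_univ, add_mul, mul_add, apply_ite Finset.card]
  push_cast
  ring

end expect2

lemma trs_nonneg {a b : ℕ} (M : Matrix (Fin a) (Fin b) ℝ) : 0 ≤ trs M := by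
  unfold trs; positivity

set_option maxHeartbeats 2000000 in
theorem stmt_0
    {Ω : Type*} [MeasureSpace Ω] [IsProbabilityMeasure (ℙ : Measure Ω)]
    (ρ₁ ρ₂ p : ℝ) (hρ₁ : 0 < ρ₁) (hρ₂ : 0 < ρ₂) (hp0 : 0 ≤ p) (hp1 : p ≤ 1)
    (n₁ n₂ : ℕ → ℕ) (hn₁pos : ∀ n, 0 < n₁ n) (hn₂pos : ∀ n, 0 < n₂ n)
    (hn₁ : Tendsto (fun n : ℕ => (n₁ n : ℝ) / n) atTop (nhds ρ₁))
    (hn₂ : Tendsto (fun n : ℕ => (n₂ n : ℝ) / n) atTop (nhds ρ₂))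
    (A : (n : ℕ) → Ω → Matrix (Fin (n₁ n)) (Fin (n₂ n)) ℝ)
    (hmeas : ∀ n i j, Measurable (fun ω => A n ω i j))
    (h01 : ∀ n ω i j, A n ω i j = 0 ∨ A n ω i j = 1)
    (hber : ∀ n i j, (ℙ : Measure Ω) {ω | A n ω i j = 1} = ENNReal.ofReal p)
    (hindep : ∀ n, iIndepFun
      (fun (ij : Fin (n₁ n) × Fin (n₂ n)) ω => A n ω ij.1 ij.2) ℙ) :
    ∀ᵐ ω ∂(ℙ : Measure Ω),
      Tendsto (fun n : ℕ => specNorm (Matrix.of fun i j =>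
          A n ω i j / n -
            Real.sqrt (ρ₁ * ρ₂) * p / (Real.sqrt (n₁ n) * Real.sqrt (n₂ n))))
        atTop (nhds 0) := by
  classical
  set c : ℝ := Real.sqrt (ρ₁ * ρ₂) * p with hc
  set X : (n : ℕ) → Fin (n₁ n) × Fin (n₂ n) → Ω → ℝ :=
    fun n e ω => A n ω e.1 e.2 - p with hX
  have hXmeas : ∀ n e, Measurable (X n e) := fun n e => (hmeas n e.1 e.2).sub measurable_const
  have hXbdd : ∀ n e ω, |X n e ω| ≤ 1 := by
    intro n e ω
    rw [hX]
    simp only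
    rcases h01 n ω e.1 e.2 with h | h <;> rw [h, abs_le] <;> constructor <;> linarith
  have hXindep : ∀ n, iIndepFun (X n) ℙ :=
    fun n => (hindep n).comp (fun _ => fun x => x - p)
      (fun _ => measurable_id.sub measurable_const)
  have hXzero : ∀ n e, ∫ ω, X n e ω = 0 := by
    intro n e
    have hs : MeasurableSet {ω | A n ω e.1 e.2 = 1} :=
      (hmeas n e.1 e.2) (measurableSet_singleton 1)
    have hind : (fun ω => A n ω e.1 e.2)
        = {ω | A n ω e.1 e.2 = 1}.indicator (fun _ => (1:ℝ)) := by
      funext ω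
      rcases h01 n ω e.1 e.2 with h | h
      · rw [h, Set.indicator_of_notMem]
        intro hm
        rw [Set.mem_setOf_eq, h] at hm
        norm_num at hm
      · rw [h, Set.indicator_of_mem]
        exact h
    have hAint : Integrable (fun ω => A n ω e.1 e.2) ℙ := by
      apply (integrable_const (1:ℝ)).mono' (hmeas n e.1 e.2).aestronglyMeasurable
      refine ae_of_all _ fun ω => ?_
      rcases h01 n ω e.1 e.2 with h | h <;> rw [h] <;> simp
    have hAval : ∫ ω, A n ω e.1 e.2 = p := by
      rw [hind, integral_indicator_const _ hs, measureReal_def, hber n e.1 e.2]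
      simp [ENNReal.toReal_ofReal hp0]
    rw [hX]
    simp only
    rw [integral_sub hAint (integrable_const p), hAval, integral_const]
    simp
  set Emat : (n : ℕ) → Ω → Matrix (Fin (n₁ n)) (Fin (n₂ n)) ℝ :=
    fun n ω => Matrix.of fun i j => X n (i,j) ω with hE
  set T : (n : ℕ) → Ω → ℝ := fun n ω => trs (Emat n ω) with hT
  have hTint : ∀ n, Integrable (T n) ℙ := fun n => trs_integrable (X n) (hXmeas n) (hXbdd n)
  have hTnn : ∀ n ω, 0 ≤ T n ω := fun n ω => trs_nonneg _
  set D : ℕ → ℝ := fun n =>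
    9*(n₁ n:ℝ)^2*(n₂ n:ℝ)^2 + (n₁ n:ℝ)*(n₂ n:ℝ)^3 + (n₁ n:ℝ)^3*(n₂ n:ℝ) with hD
  have hTexp : ∀ n, ∫ ω, T n ω ≤ D n :=
    fun n => expect_trs_le (X n) (hXmeas n) (hXbdd n) (hXindep n) (hXzero n)
  have hDnn : ∀ n, 0 ≤ D n := fun n => by simp only [hD]; positivity
  have markov : ∀ (n : ℕ) (c' : ℝ), 0 < c' →
      (ℙ : Measure Ω) {ω | c' ≤ T n ω} ≤ ENNReal.ofReal (D n / c') := by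
    intro n c' hc'
    have h1 := mul_meas_ge_le_integral_of_nonneg (ae_of_all _ (hTnn n)) (hTint n) c'
    have h2 : ((ℙ : Measure Ω) {ω | c' ≤ T n ω}).toReal ≤ D n / c' := by
      rw [le_div_iff₀ hc']
      rw [measureReal_def] at h1
      nlinarith [hTexp n]
    refine (ENNReal.le_ofReal_iff_toReal_le (measure_ne_top _ _) ?_).2 h2
    exact div_nonneg (hDnn n) hc'.le
  set K : ℝ := max (ρ₁ + 1) (ρ₂ + 1) with hK
  have hK0 : 0 < K := lt_of_lt_of_le (by linarith) (le_max_left _ _)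
  have hup1 : ∀ᶠ n in atTop, (n₁ n : ℝ) ≤ K * n := by
    have h := hn₁.eventually_lt_const
      (lt_of_lt_of_le (lt_add_one ρ₁) (le_max_left (ρ₁+1) (ρ₂+1)))
    filter_upwards [h, eventually_ge_atTop 1] with n hn hn1
    have hn0 : (0:ℝ) < n := by exact_mod_cast hn1
    have := (div_le_iff₀ hn0).1 hn.le
    linarith
  have hup2 : ∀ᶠ n in atTop, (n₂ n : ℝ) ≤ K * n := by
    have h := hn₂.eventually_lt_const
      (lt_of_lt_of_le (lt_add_one ρ₂) (le_max_right (ρ₁+1) (ρ₂+1)))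
    filter_upwards [h, eventually_ge_atTop 1] with n hn hn1
    have hn0 : (0:ℝ) < n := by exact_mod_cast hn1
    have := (div_le_iff₀ hn0).1 hn.le
    linarith
  have hk : ∀ k : ℕ, ∀ᵐ ω ∂(ℙ : Measure Ω), ∀ᶠ n : ℕ in atTop,
      ω ∉ {ω' | 1 ≤ n ∧ (1/((k:ℝ)+1))^6*(n:ℝ)^6 ≤ T n ω'} := by
    intro k
    set ε : ℝ := 1/((k:ℝ)+1) with hε'
    have hε : 0 < ε := by rw [hε']; positivity
    set u : ℕ → ℝ := fun n => D n / (ε^6 * (n:ℝ)^6) with hu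
    have hu_nn : ∀ n, 0 ≤ u n := fun n =>
      div_nonneg (hDnn n) (by positivity)
    have hsummable : Summable u := by
      refine summable_of_isBigO_nat (g := fun n : ℕ => 1/(n:ℝ)^2)
        (Real.summable_one_div_nat_pow.2 one_lt_two)
        (Asymptotics.IsBigO.of_bound (11*K^4/ε^6) ?_)
      filter_upwards [hup1, hup2, eventually_ge_atTop 1] with n h1 h2 hn1
      have hn0 : (0:ℝ) < n := by exact_mod_cast hn1
      have hc1 : (0:ℝ) ≤ (n₁ n : ℝ) := Nat.cast_nonneg _
      have hc2 : (0:ℝ) ≤ (n₂ n : ℝ) := Nat.cast_nonneg _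
      have p1 : (n₁ n:ℝ)^2 ≤ (K*n)^2 := pow_le_pow_left₀ hc1 h1 2
      have p2 : (n₂ n:ℝ)^2 ≤ (K*n)^2 := pow_le_pow_left₀ hc2 h2 2
      have p3 : (n₁ n:ℝ)^3 ≤ (K*n)^3 := pow_le_pow_left₀ hc1 h1 3
      have p4 : (n₂ n:ℝ)^3 ≤ (K*n)^3 := pow_le_pow_left₀ hc2 h2 3
      have hD4 : D n ≤ 11*K^4*(n:ℝ)^4 := by
        simp only [hD]
        nlinarith [sq_nonneg ((n₁ n:ℝ)*(n₂ n:ℝ)), mul_pos (mul_pos hK0 hn0)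
          (mul_pos hK0 hn0), mul_le_mul p1 p2 (by positivity) (by positivity),
          mul_le_mul h1 p4 (by positivity) (by positivity),
          mul_le_mul p3 h2 (by positivity) (by positivity)]
      rw [Real.norm_eq_abs, Real.norm_eq_abs, abs_of_nonneg (hu_nn n),
        abs_of_nonneg (by positivity : (0:ℝ) ≤ 1/(n:ℝ)^2), hu]
      simp only
      rw [div_le_iff₀ (by positivity)]
      have heq : (11*K^4/ε^6 * (1/(n:ℝ)^2)) * (ε^6*(n:ℝ)^6) = 11*K^4*(n:ℝ)^4 := by
        field_simp
      rw [heq]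
      exact hD4
    have hle : ∀ n : ℕ, (ℙ : Measure Ω) {ω' | 1 ≤ n ∧ ε^6*(n:ℝ)^6 ≤ T n ω'}
        ≤ ENNReal.ofReal (u n) := by
      intro n
      rcases Nat.eq_zero_or_pos n with h0 | hpos
      · subst h0
        have hempty : {ω' : Ω | 1 ≤ 0 ∧ ε^6*((0:ℕ):ℝ)^6 ≤ T 0 ω'} = ∅ := by
          ext ω'; simp
        rw [hempty, measure_empty]
        exact bot_le
      · have hn0 : (0:ℝ) < n := by exact_mod_cast hpos
        have hcpos : 0 < ε^6*(n:ℝ)^6 := by positivity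
        refine le_trans (measure_mono ?_) (markov n (ε^6*(n:ℝ)^6) hcpos)
        intro ω' hω'
        exact hω'.2
    refine ae_eventually_notMem ?_
    refine ne_top_of_le_ne_top ?_ (ENNReal.tsum_le_tsum hle)
    rw [← ENNReal.ofReal_tsum_of_nonneg hu_nn hsummable]
    exact ENNReal.ofReal_ne_top
  set dd : ℕ → ℝ := fun n => p/(n:ℝ) - c/(Real.sqrt (n₁ n) * Real.sqrt (n₂ n)) with hdd
  have hMle : ∀ n ω, specNorm (Matrix.of fun i j =>
        A n ω i j / n - c / (Real.sqrt (n₁ n) * Real.sqrt (n₂ n)))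
      ≤ ‖Emat n ω‖/(n:ℝ) + |dd n| * Real.sqrt ((n₁ n : ℝ) * (n₂ n : ℝ)) := by
    intro n ω
    rw [specNorm_eq_norm]
    have hdecomp : (Matrix.of fun i j =>
          A n ω i j / n - c / (Real.sqrt (n₁ n) * Real.sqrt (n₂ n)))
        = ((n:ℝ))⁻¹ • Emat n ω + Matrix.of (fun _ _ => dd n) := by
      ext i j
      simp only [Matrix.of_apply, Matrix.add_apply, Matrix.smul_apply, hE, hX, hdd,
        smul_eq_mul]
      ring
    rw [hdecomp]
    refine (norm_add_le _ _).trans (add_le_add ?_ ?_)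
    · rw [norm_smul, Real.norm_eq_abs, abs_inv, abs_of_nonneg (Nat.cast_nonneg n),
        inv_mul_eq_div]
    · refine (l2_norm_le_frobenius _).trans (le_of_eq ?_)
      have hsum : (∑ i : Fin (n₁ n), ∑ j : Fin (n₂ n),
          (Matrix.of (fun _ _ => dd n) : Matrix (Fin (n₁ n)) (Fin (n₂ n)) ℝ) i j ^ 2)
          = ((n₁ n : ℝ) * (n₂ n : ℝ)) * dd n ^ 2 := by
        simp [Finset.sum_const, Finset.card_univ, nsmul_eq_mul]
        ring
      rw [hsum, Real.sqrt_mul (by positivity), Real.sqrt_sq_eq_abs, mul_comm]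
  have hdet : Tendsto (fun n => |dd n| * Real.sqrt ((n₁ n:ℝ)*(n₂ n:ℝ))) atTop (nhds 0) := by
    have hcongr : ∀ᶠ n in atTop, |p * Real.sqrt ((n₁ n:ℝ)/n * ((n₂ n:ℝ)/n)) - c|
        = |dd n| * Real.sqrt ((n₁ n:ℝ)*(n₂ n:ℝ)) := by
      filter_upwards [eventually_ge_atTop 1] with n hn
      have hn0 : (0:ℝ) < n := by exact_mod_cast hn
      have h1 : (0:ℝ) < Real.sqrt (n₁ n) := Real.sqrt_pos.2 (by exact_mod_cast hn₁pos n)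
      have h2 : (0:ℝ) < Real.sqrt (n₂ n) := Real.sqrt_pos.2 (by exact_mod_cast hn₂pos n)
      have hsq : Real.sqrt ((n₁ n:ℝ)*(n₂ n:ℝ)) = Real.sqrt (n₁ n) * Real.sqrt (n₂ n) :=
        Real.sqrt_mul (Nat.cast_nonneg _) _
      have hss : Real.sqrt ((n₁ n:ℝ)/n * ((n₂ n:ℝ)/n))
          = Real.sqrt (n₁ n) * Real.sqrt (n₂ n) / n := by
        rw [show (n₁ n:ℝ)/n * ((n₂ n:ℝ)/n) = ((n₁ n:ℝ)*(n₂ n:ℝ))/((n:ℝ)^2) by ring,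
          Real.sqrt_div (by positivity), hsq, Real.sqrt_sq hn0.le]
      have hkey : dd n * Real.sqrt ((n₁ n:ℝ)*(n₂ n:ℝ))
          = p * Real.sqrt ((n₁ n:ℝ)/n * ((n₂ n:ℝ)/n)) - c := by
        rw [hss, hsq, hdd]
        simp only
        field_simp
      rw [← hkey, abs_mul, abs_of_nonneg (Real.sqrt_nonneg _)]
    have hlim0 : Tendsto (fun n => p * Real.sqrt ((n₁ n:ℝ)/n * ((n₂ n:ℝ)/n)) - c)
        atTop (nhds (p * Real.sqrt (ρ₁*ρ₂) - c)) :=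
      (((hn₁.mul hn₂).sqrt).const_mul p).sub_const c
    have hzero : p * Real.sqrt (ρ₁*ρ₂) - c = 0 := by rw [hc]; ring
    rw [hzero] at hlim0
    have hlim : Tendsto (fun n => |p * Real.sqrt ((n₁ n:ℝ)/n * ((n₂ n:ℝ)/n)) - c|)
        atTop (nhds 0) := by
      simpa using hlim0.abs
    exact hlim.congr' hcongr
  filter_upwards [ae_all_iff.2 hk] with ω hω
  have hE0 : Tendsto (fun n => ‖Emat n ω‖/(n:ℝ)) atTop (nhds 0) := by
    rw [Metric.tendsto_atTop]
    intro δ hδ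
    obtain ⟨k, hk'⟩ := exists_nat_one_div_lt hδ
    have hωk := hω k
    rw [eventually_atTop] at hωk
    obtain ⟨N, hN⟩ := hωk
    refine ⟨max N 1, fun n hn => ?_⟩
    have hn1 : 1 ≤ n := le_trans (le_max_right N 1) hn
    have hnN : N ≤ n := le_trans (le_max_left N 1) hn
    have hnot := hN n hnN
    have hTlt : T n ω < (1/((k:ℝ)+1))^6 * (n:ℝ)^6 := by
      by_contra hcon
      exact hnot ⟨hn1, not_lt.1 hcon⟩
    have hn0 : (0:ℝ) < n := by exact_mod_cast hn1
    have hek : (0:ℝ) < 1/((k:ℝ)+1) := by positivity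
    have h6 : ‖Emat n ω‖^6 ≤ T n ω := norm_six_le_trs _
    have hlt : ‖Emat n ω‖^6 < (1/((k:ℝ)+1) * (n:ℝ))^6 := by
      rw [mul_pow]
      exact lt_of_le_of_lt h6 hTlt
    have hEn : ‖Emat n ω‖ < 1/((k:ℝ)+1) * n :=
      lt_of_pow_lt_pow_left₀ 6 (by positivity) hlt
    rw [Real.dist_eq, sub_zero, abs_of_nonneg (by positivity)]
    have hlt2 : ‖Emat n ω‖/(n:ℝ) < 1/((k:ℝ)+1) := by
      rw [div_lt_iff₀ hn0]
      exact hEn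
    linarith
  have hfin : Tendsto (fun n => ‖Emat n ω‖/(n:ℝ)
      + |dd n| * Real.sqrt ((n₁ n:ℝ)*(n₂ n:ℝ))) atTop (nhds 0) := by
    simpa using hE0.add hdet
  refine squeeze_zero (fun n => ?_) (fun n => hMle n ω) hfin
  rw [specNorm_eq_norm]
  exact norm_nonneg _
end

section
/- Let K ≥ 2, let n₁, …, n_K be positive integers, write u_k = 1_{n_k}/√n_k, and let c_{kj} ∈ ℝ. Let U ∈ ℝ^{(K−1)×(K−1)} be symmetric with I_{K−1} − U invertible, and suppose Y_k ∈ ℝ^{n_k×(K−1)} satisfy, for every k: Y_k − Σ_{j=1}^K c_{kj} u_k u_jᵀ Y_j − Y_k U = 0. Then for every k, Y_k = u_k b_kᵀ where b_k = (I_{K−1} − U)^{-1} Σ_{j=1}^K c_{kj} Y_jᵀ u_j; in particular every row of Y_k equals b_kᵀ/√n_k, i.e. all nodes in community k have identical row representation. -/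
open Matrix

/-- The normalized all-ones vector `1_m / √m`. -/
noncomputable def uvec (m : ℕ) : Fin m → ℝ := fun _ => (Real.sqrt m)⁻¹

/-!
Collecting the coupling terms, the block condition reads `Y_k (I - U) = u_k s_kᵀ` with
`s_k = Σ_j c_{kj} Y_jᵀ u_j`. Multiplying on the right by `(I - U)⁻¹` gives
`Y_k = u_k (s_kᵀ (I - U)⁻¹) = u_k ((I - U)⁻¹ s_k)ᵀ`, the last step because `(I - U)⁻¹` is symmetric
along with `U`. A rank-one matrix `u_k bᵀ` with `u_k` constant has identical rows `bᵀ/√n_k`.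
-/

namespace Matrix

variable {ι m n α : Type*}

theorem vecMulVec_sum [NonUnitalNonAssocSemiring α] (w : m → α) (s : Finset ι)
    (v : ι → n → α) : vecMulVec w (∑ i ∈ s, v i) = ∑ i ∈ s, vecMulVec w (v i) := by
  ext a b
  simp only [vecMulVec_apply, Finset.sum_apply, Matrix.sum_apply, Finset.mul_sum]

theorem sum_smul_vecMulVec [CommSemiring α] [Fintype ι] (w : m → α) (c : ι → α)
    (v : ι → n → α) : ∑ i, c i • vecMulVec w (v i) = vecMulVec w (∑ i, c i • v i) := by
  simp only [vecMulVec_sum, vecMulVec_smul]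

theorem eq_vecMulVec_of_sub_vecMulVec_sub_mul_eq_zero [Fintype n] [DecidableEq n] [CommRing α]
    {Y : Matrix m n α} {U : Matrix n n α} (hU : U.IsSymm) (hUinv : IsUnit (1 - U))
    {w : m → α} {s : n → α} (h : Y - vecMulVec w s - Y * U = 0) :
    Y = vecMulVec w ((1 - U)⁻¹ *ᵥ s) := by
  have hY : Y * (1 - U) = vecMulVec w s := by
    rw [Matrix.mul_sub, Matrix.mul_one]
    exact sub_eq_zero.mp (by rw [← h]; abel)
  have hinv_symm : ((1 - U)⁻¹).IsSymm := (isSymm_one.sub hU).inv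
  calc Y = Y * (1 - U) * (1 - U)⁻¹ :=
        (mul_nonsing_inv_cancel_right _ _ ((isUnit_iff_isUnit_det _).mp hUinv)).symm
    _ = vecMulVec w (s ᵥ* (1 - U)⁻¹) := by rw [hY, vecMulVec_mul]
    _ = vecMulVec w ((1 - U)⁻¹ *ᵥ s) := by rw [← mulVec_transpose, hinv_symm.eq]

end Matrix

theorem vecMulVec_uvec_apply (m : ℕ) {n : Type*} (v : n → ℝ) (a : Fin m) (b : n) :
    vecMulVec (uvec m) v a b = v b / Real.sqrt m := by
  rw [vecMulVec_apply, uvec, div_eq_inv_mul]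

theorem stmt_10_general
    (K : ℕ)
    (nsz : Fin K → ℕ)
    (c : Fin K → Fin K → ℝ)
    (U : Matrix (Fin (K - 1)) (Fin (K - 1)) ℝ) (hUsymm : U.IsSymm)
    (hUinv : IsUnit (1 - U))
    (Y : (k : Fin K) → Matrix (Fin (nsz k)) (Fin (K - 1)) ℝ)
    (hopt : ∀ k, Y k -
      (∑ j, c k j • Matrix.vecMulVec (uvec (nsz k)) ((Y j)ᵀ.mulVec (uvec (nsz j)))) -
      Y k * U = 0) :
    ∀ k, Y k = Matrix.vecMulVec (uvec (nsz k))
        ((1 - U)⁻¹.mulVec (∑ j, c k j • (Y j)ᵀ.mulVec (uvec (nsz j)))) ∧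
      ∀ (a : Fin (nsz k)) (col : Fin (K - 1)),
        Y k a col =
          (1 - U)⁻¹.mulVec (∑ j, c k j • (Y j)ᵀ.mulVec (uvec (nsz j))) col /
            Real.sqrt (nsz k) := by
  intro k
  have hrank_one := eq_vecMulVec_of_sub_vecMulVec_sub_mul_eq_zero hUsymm hUinv
    (by simpa only [sum_smul_vecMulVec] using hopt k)
  exact ⟨hrank_one, fun a col => by rw [hrank_one, vecMulVec_uvec_apply]⟩

theorem stmt_10
    (K : ℕ) (hK : 2 ≤ K)
    (nsz : Fin K → ℕ) (hnsz : ∀ k, 0 < nsz k)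
    (c : Fin K → Fin K → ℝ)
    (U : Matrix (Fin (K - 1)) (Fin (K - 1)) ℝ) (hUsymm : U.IsSymm)
    (hUinv : IsUnit (1 - U))
    (Y : (k : Fin K) → Matrix (Fin (nsz k)) (Fin (K - 1)) ℝ)
    (hopt : ∀ k, Y k -
      (∑ j, c k j • Matrix.vecMulVec (uvec (nsz k)) ((Y j)ᵀ.mulVec (uvec (nsz j)))) -
      Y k * U = 0) :
    ∀ k, Y k = Matrix.vecMulVec (uvec (nsz k))
        ((1 - U)⁻¹.mulVec (∑ j, c k j • (Y j)ᵀ.mulVec (uvec (nsz j)))) ∧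
      ∀ (a : Fin (nsz k)) (col : Fin (K - 1)),
        Y k a col =
          (1 - U)⁻¹.mulVec (∑ j, c k j • (Y j)ᵀ.mulVec (uvec (nsz j))) col /
            Real.sqrt (nsz k) :=
  stmt_10_general K nsz c U hUsymm hUinv Y hopt
end

section
/- Let ρ₁, ρ₂, p₁, p₂, q > 0 and define a₁ = √(ρ₁p₁ + √(ρ₁ρ₂)·q) and a₂ = √(ρ₂p₂ + √(ρ₁ρ₂)·q). Then the quantity E = (a₂/a₁)²·ρ₁p₁ + (a₁/a₂)²·ρ₂p₂ − 2√(ρ₁ρ₂)·q satisfies: E > 0 if and only if q < √(p₁p₂), and E = 0 if and only if q = √(p₁p₂). -/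
/-!
Write `A = ρ₁p₁`, `B = ρ₂p₂` and `s = √(ρ₁ρ₂)·q`, so that `a₁² = A + s` and `a₂² = B + s`.
Clearing denominators, `E = (AB - s²)(A + B + 2s) / (a₁²a₂²)`, and `AB - s² = ρ₁ρ₂(p₁p₂ - q²)`.
Hence `E` is `p₁p₂ - q²` times a positive factor, and its sign is that of `√(p₁p₂) - q`.
-/

open Real

lemma sq_div_mul_add_sq_div_mul_sub_two_mul {A B s a₁ a₂ : ℝ} (ha₁ : a₁ ≠ 0) (ha₂ : a₂ ≠ 0)
    (h₁ : a₁ ^ 2 = A + s) (h₂ : a₂ ^ 2 = B + s) :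
    (a₂ / a₁) ^ 2 * A + (a₁ / a₂) ^ 2 * B - 2 * s =
      (A * B - s ^ 2) * (A + B + 2 * s) / (a₁ ^ 2 * a₂ ^ 2) := by
  have hA : A + s ≠ 0 := h₁ ▸ pow_ne_zero 2 ha₁
  have hB : B + s ≠ 0 := h₂ ▸ pow_ne_zero 2 ha₂
  rw [div_pow, div_pow, h₁, h₂]
  field_simp
  ring

lemma pos_iff_lt_sqrt_and_eq_zero_iff_of_eq_sub_sq_mul {E p q C : ℝ} (hp : 0 ≤ p) (hq : 0 ≤ q)
    (hC : 0 < C) (hE : E = (p - q ^ 2) * C) :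
    (0 < E ↔ q < √p) ∧ (E = 0 ↔ q = √p) := by
  rw [hE, mul_pos_iff_of_pos_right hC, mul_eq_zero_iff_right hC.ne', sub_pos, sub_eq_zero,
    lt_sqrt hq, eq_comm (a := q), sqrt_eq_iff_eq_sq hp hq]
  exact ⟨.rfl, .rfl⟩

theorem stmt_15
    (ρ₁ ρ₂ p₁ p₂ q : ℝ)
    (hρ₁ : 0 < ρ₁) (hρ₂ : 0 < ρ₂) (hp₁ : 0 < p₁) (hp₂ : 0 < p₂) (hq : 0 < q)
    (a₁ a₂ : ℝ)
    (ha₁ : a₁ = Real.sqrt (ρ₁ * p₁ + Real.sqrt (ρ₁ * ρ₂) * q))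
    (ha₂ : a₂ = Real.sqrt (ρ₂ * p₂ + Real.sqrt (ρ₁ * ρ₂) * q)) :
    (0 < (a₂ / a₁) ^ 2 * (ρ₁ * p₁) + (a₁ / a₂) ^ 2 * (ρ₂ * p₂) -
        2 * Real.sqrt (ρ₁ * ρ₂) * q ↔ q < Real.sqrt (p₁ * p₂)) ∧
    ((a₂ / a₁) ^ 2 * (ρ₁ * p₁) + (a₁ / a₂) ^ 2 * (ρ₂ * p₂) -
        2 * Real.sqrt (ρ₁ * ρ₂) * q = 0 ↔ q = Real.sqrt (p₁ * p₂)) := by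
  set s := √(ρ₁ * ρ₂) * q with hs
  have hs_pos : 0 < s := by positivity
  have ha₁_sq : a₁ ^ 2 = ρ₁ * p₁ + s := by rw [ha₁, sq_sqrt (by positivity)]
  have ha₂_sq : a₂ ^ 2 = ρ₂ * p₂ + s := by rw [ha₂, sq_sqrt (by positivity)]
  have hs_sq : s ^ 2 = ρ₁ * ρ₂ * q ^ 2 := by rw [hs, mul_pow, sq_sqrt (by positivity)]
  have ha₁_pos : 0 < a₁ := by rw [ha₁]; positivity
  have ha₂_pos : 0 < a₂ := by rw [ha₂]; positivity
  rw [mul_assoc 2, ← hs]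
  refine pos_iff_lt_sqrt_and_eq_zero_iff_of_eq_sub_sq_mul (by positivity) hq.le
    (C := ρ₁ * ρ₂ * (ρ₁ * p₁ + ρ₂ * p₂ + 2 * s) / (a₁ ^ 2 * a₂ ^ 2)) (by positivity) ?_
  rw [sq_div_mul_add_sq_div_mul_sub_two_mul ha₁_pos.ne' ha₂_pos.ne' ha₁_sq ha₂_sq, hs_sq]
  ring
end
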